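/- Let $f:\Omega_D^4\to\mathbb{R}_3$ be a left slice function induced by a stem function $F=F_1+iF_2$. Then for all $\alpha,\beta\in\mathbb{R}$ with $\alpha+i\beta\in D$ and all $J\in\mathbb{S}_{\mathbb{R}_3}$, $\frac{1}{\sqrt 2}\|F(\alpha+i\beta)\| \leq \max\{|f(\alpha+\beta J)|, |f(\alpha-\beta J)|\} \leq \sqrt 2\,\|F(\alpha+i\beta)\|$, where $\|F\|^2=|F_1|^2+|F_2|^2$ with $|\cdot|$ the euclidean norm on $\mathbb{R}_3\cong\mathbb{R}^8$. -/

import Mathlib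

/-- The concrete model `ℍ × ℍ` of the Clifford algebra `ℝ₃`. -/
abbrev A2 : Type := Quaternion ℝ × Quaternion ℝ

/-- The square roots of `-1` in `ℝ₃ ≅ ℍ × ℍ` (the set `𝕊_{ℝ₃} ≅ 𝕊² × 𝕊²`). -/
def SRoots : Set A2 := {J | J * J = -1}

/-- The axially symmetric set `Ω_D⁴ ⊆ 𝒬_{ℝ₃}` associated to `D ⊆ ℂ`. -/
def OmegaD (D : Set ℂ) : Set A2 :=
  {x | ∃ α β : ℝ, ∃ J ∈ SRoots, (⟨α, β⟩ : ℂ) ∈ D ∧ x = algebraMap ℝ A2 α + β • J}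

/-- The euclidean norm of `x ∈ ℝ₃ ≅ ℝ⁸`; under the splitting `x = ω₊q + ω₋p` it equals
`√((|q|² + |p|²)/2)`. -/
noncomputable def enorm8 (x : A2) : ℝ :=
  Real.sqrt ((Quaternion.normSq x.1 + Quaternion.normSq x.2) / 2)

lemma enorm8_nonneg (x : A2) : 0 ≤ enorm8 x := Real.sqrt_nonneg _

lemma enorm8_sq (x : A2) :
    enorm8 x ^ 2 = (Quaternion.normSq x.1 + Quaternion.normSq x.2) / 2 := by
  rw [enorm8, Real.sq_sqrt]
  have h1 : (0:ℝ) ≤ Quaternion.normSq x.1 := Quaternion.normSq_nonneg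
  have h2 : (0:ℝ) ≤ Quaternion.normSq x.2 := Quaternion.normSq_nonneg
  linarith

lemma quat_par (a q : Quaternion ℝ) :
    Quaternion.normSq (a + q) + Quaternion.normSq (a - q)
      = 2 * Quaternion.normSq a + 2 * Quaternion.normSq q := by
  simp only [Quaternion.normSq_def', Quaternion.re_add, Quaternion.imI_add,
    Quaternion.imJ_add, Quaternion.imK_add, Quaternion.re_sub, Quaternion.imI_sub,
    Quaternion.imJ_sub, Quaternion.imK_sub]
  ring

lemma normSq_root (j : Quaternion ℝ) (h : j * j = -1) : Quaternion.normSq j = 1 := by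
  have h2 : Quaternion.normSq j * Quaternion.normSq j = 1 := by
    rw [← map_mul, h]; simp
  rcases mul_self_eq_one_iff.mp h2 with h | h
  · exact h
  · nlinarith [(Quaternion.normSq_nonneg : (0:ℝ) ≤ Quaternion.normSq j)]

/-- For a left slice function `f` on `Ω_D⁴` induced by a stem function `F = F₁ + iF₂`,
`(1/√2)‖F(α+iβ)‖ ≤ max {|f(α+βJ)|, |f(α-βJ)|} ≤ √2 ‖F(α+iβ)‖` for all `α, β ∈ ℝ` and
`J ∈ 𝕊_{ℝ₃}`, where `‖F‖² = |F₁|² + |F₂|²`. -/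
theorem slice_function_norm_estimate (D : Set ℂ)
    (hsym : ∀ z ∈ D, (starRingEnd ℂ) z ∈ D)
    (F1 F2 : ℂ → A2)
    (hF1 : ∀ z ∈ D, (starRingEnd ℂ) z ∈ D → F1 ((starRingEnd ℂ) z) = F1 z)
    (hF2 : ∀ z ∈ D, (starRingEnd ℂ) z ∈ D → F2 ((starRingEnd ℂ) z) = -F2 z)
    (f : A2 → A2)
    (hf : ∀ (α β : ℝ), ∀ J ∈ SRoots, (⟨α, β⟩ : ℂ) ∈ D →
      f (algebraMap ℝ A2 α + β • J) = F1 ⟨α, β⟩ + J * F2 ⟨α, β⟩) :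
    ∀ (α β : ℝ), ∀ J ∈ SRoots, (⟨α, β⟩ : ℂ) ∈ D →
      (Real.sqrt 2)⁻¹ * Real.sqrt (enorm8 (F1 ⟨α, β⟩) ^ 2 + enorm8 (F2 ⟨α, β⟩) ^ 2) ≤
          max (enorm8 (f (algebraMap ℝ A2 α + β • J)))
            (enorm8 (f (algebraMap ℝ A2 α - β • J))) ∧
        max (enorm8 (f (algebraMap ℝ A2 α + β • J)))
            (enorm8 (f (algebraMap ℝ A2 α - β • J))) ≤
          Real.sqrt 2 * Real.sqrt (enorm8 (F1 ⟨α, β⟩) ^ 2 + enorm8 (F2 ⟨α, β⟩) ^ 2) := by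
  intro α β J hJ hD
  set a := F1 ⟨α, β⟩ with ha
  set b := F2 ⟨α, β⟩ with hb
  -- the conjugate point
  have hconj : (starRingEnd ℂ) (⟨α, β⟩ : ℂ) = (⟨α, -β⟩ : ℂ) := rfl
  have hD' : (⟨α, -β⟩ : ℂ) ∈ D := by rw [← hconj]; exact hsym _ hD
  have hF1' : F1 ⟨α, -β⟩ = a := by
    have := hF1 ⟨α, β⟩ hD (hsym _ hD)
    rwa [hconj] at this
  have hF2' : F2 ⟨α, -β⟩ = -b := by
    have := hF2 ⟨α, β⟩ hD (hsym _ hD)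
    rwa [hconj] at this
  -- values of f
  have hu : f (algebraMap ℝ A2 α + β • J) = a + J * b := hf α β J hJ hD
  have hv : f (algebraMap ℝ A2 α - β • J) = a - J * b := by
    have hpt : algebraMap ℝ A2 α - β • J = algebraMap ℝ A2 α + (-β) • J := by
      rw [neg_smul, sub_eq_add_neg]
    rw [hpt, hf α (-β) J hJ hD', hF1', hF2', mul_neg, ← sub_eq_add_neg]
  rw [hu, hv]
  -- norms of components of J
  have hJJ : J * J = -1 := hJ
  have hJ1 : Quaternion.normSq J.1 = 1 := normSq_root _ (congrArg Prod.fst hJJ)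
  have hJ2 : Quaternion.normSq J.2 = 1 := normSq_root _ (congrArg Prod.snd hJJ)
  have hq1 : Quaternion.normSq (J * b).1 = Quaternion.normSq b.1 := by
    show Quaternion.normSq (J.1 * b.1) = _
    rw [map_mul, hJ1, one_mul]
  have hq2 : Quaternion.normSq (J * b).2 = Quaternion.normSq b.2 := by
    show Quaternion.normSq (J.2 * b.2) = _
    rw [map_mul, hJ2, one_mul]
  -- key identity
  have key : enorm8 (a + J * b) ^ 2 + enorm8 (a - J * b) ^ 2
      = 2 * (enorm8 a ^ 2 + enorm8 b ^ 2) := by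
    have h1 := quat_par a.1 (J * b).1
    have h2 := quat_par a.2 (J * b).2
    simp only [enorm8_sq, Prod.fst_add, Prod.snd_add, Prod.fst_sub, Prod.snd_sub]
    rw [hq1] at h1
    rw [hq2] at h2
    linarith
  set u := enorm8 (a + J * b) with hu'
  set v := enorm8 (a - J * b) with hv'
  have hun : 0 ≤ u := enorm8_nonneg _
  have hvn : 0 ≤ v := enorm8_nonneg _
  set S := Real.sqrt (enorm8 a ^ 2 + enorm8 b ^ 2) with hS
  have hSn : 0 ≤ S := Real.sqrt_nonneg _
  have hS2 : S ^ 2 = enorm8 a ^ 2 + enorm8 b ^ 2 := by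
    rw [hS, Real.sq_sqrt]; positivity
  have hMn : 0 ≤ max u v := le_max_of_le_left hun
  have hMsq_ge : S ^ 2 ≤ max u v ^ 2 := by
    rcases le_total u v with h | h
    · rw [max_eq_right h]; nlinarith
    · rw [max_eq_left h]; nlinarith
  have hMsq_le : max u v ^ 2 ≤ 2 * S ^ 2 := by
    rcases le_total u v with h | h
    · rw [max_eq_right h]; nlinarith
    · rw [max_eq_left h]; nlinarith
  have hSle : S ≤ max u v := by
    nlinarith
  constructor
  · have h2 : (Real.sqrt 2)⁻¹ ≤ 1 := by
      rw [inv_le_one_iff₀]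
      right
      rw [show (1:ℝ) = Real.sqrt 1 by simp]
      exact Real.sqrt_le_sqrt (by norm_num)
    have := mul_le_of_le_one_left hSn h2
    linarith
  · have h1 : max u v = Real.sqrt (max u v ^ 2) := (Real.sqrt_sq hMn).symm
    have h3 : Real.sqrt (2 * S ^ 2) = Real.sqrt 2 * S := by
      rw [Real.sqrt_mul (by norm_num), Real.sqrt_sq hSn]
    rw [h1, ← h3]
    exact Real.sqrt_le_sqrt hMsq_le
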